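/- arXiv:2407.05351 — 4 statements merged into one kernel-verified Lean document; each statement's English description precedes it below -/
import Mathlib

section
/- Let M₁, M₂ be positive semidefinite operators on a nontrivial finite-dimensional complex Hilbert space with M₁ + M₂ = I. Then there exists a density operator ξ with M₁ ξ M₂ = 0 if and only if M₁ or M₂ is not invertible (i.e., at least one effect is rank deficient). -/
/-!
If both effects are invertible they cancel from `M₁ ξ M₂ = 0`, forcing `ξ = 0`, which has trace
`0`. Conversely, the pure state `|v⟩⟨v|` on a unit vector `v` is annihilated by `M₁` from the left
when `M₁ v = 0`, and by `M₂` from the right when `M₂† v = 0`; such a `v` exists as soon as `M₁`,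
respectively `M₂† = star M₂`, is not invertible.
-/

open scoped InnerProductSpace
open ContinuousLinearMap InnerProductSpace

theorem eq_zero_of_mul_mul_eq_zero {R : Type*} [MonoidWithZero R] {a b x : R} (ha : IsUnit a)
    (hb : IsUnit b) (h : a * x * b = 0) : x = 0 :=
  ha.mul_right_eq_zero.mp (hb.mul_left_eq_zero.mp h)

section

variable {𝕜 E : Type*} [RCLike 𝕜] [NormedAddCommGroup E] [InnerProductSpace 𝕜 E]
  [FiniteDimensional 𝕜 E]

theorem InnerProductSpace.trace_rankOne_self_of_norm_eq_one {v : E} (hv : ‖v‖ = 1) :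
    LinearMap.trace 𝕜 E (rankOne 𝕜 v v) = 1 := by
  rw [trace_rankOne, inner_self_eq_norm_sq_to_K, hv, RCLike.ofReal_one, one_pow]

namespace ContinuousLinearMap

theorem exists_norm_eq_one_apply_eq_zero_of_not_isUnit {T : E →L[𝕜] E} (hT : ¬IsUnit T) :
    ∃ v : E, ‖v‖ = 1 ∧ T v = 0 := by
  have := FiniteDimensional.complete 𝕜 E
  rw [isUnit_iff_isUnit_toLinearMap, LinearMap.isUnit_iff_ker_eq_bot, ← ne_eq,
    Submodule.ne_bot_iff] at hT
  obtain ⟨x, hx, hx0⟩ := hT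
  refine ⟨(‖x‖⁻¹ : 𝕜) • x, norm_smul_inv_norm hx0, ?_⟩
  rw [map_smul, ← coe_coe, LinearMap.mem_ker.mp hx, smul_zero]

theorem exists_isPositive_trace_eq_one_mul_eq_zero_of_not_isUnit {T : E →L[𝕜] E}
    (hT : ¬IsUnit T) :
    ∃ ξ : E →L[𝕜] E, ξ.IsPositive ∧ LinearMap.trace 𝕜 E ξ = 1 ∧ T * ξ = 0 := by
  obtain ⟨v, hv, hTv⟩ := T.exists_norm_eq_one_apply_eq_zero_of_not_isUnit hT
  refine ⟨rankOne 𝕜 v v, isPositive_rankOne_self v, trace_rankOne_self_of_norm_eq_one hv, ?_⟩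
  rw [mul_def, comp_rankOne, hTv, map_zero, zero_apply]

theorem exists_isPositive_trace_eq_one_mul_eq_zero_of_not_isUnit' {T : E →L[𝕜] E}
    (hT : ¬IsUnit T) :
    ∃ ξ : E →L[𝕜] E, ξ.IsPositive ∧ LinearMap.trace 𝕜 E ξ = 1 ∧ ξ * T = 0 := by
  have := FiniteDimensional.complete 𝕜 E
  have hT' : ¬IsUnit (adjoint T) := by rwa [← star_eq_adjoint, isUnit_star]
  obtain ⟨v, hv, hTv⟩ := (adjoint T).exists_norm_eq_one_apply_eq_zero_of_not_isUnit hT'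
  refine ⟨rankOne 𝕜 v v, isPositive_rankOne_self v, trace_rankOne_self_of_norm_eq_one hv, ?_⟩
  rw [mul_def, rankOne_comp, hTv, map_zero]

end ContinuousLinearMap

end

theorem perfect_labeling_iff_rank_deficient_general (d : ℕ)
    (M₁ M₂ : EuclideanSpace ℂ (Fin d) →L[ℂ] EuclideanSpace ℂ (Fin d)) :
    (∃ ξ : EuclideanSpace ℂ (Fin d) →L[ℂ] EuclideanSpace ℂ (Fin d),
        ξ.IsPositive ∧
        LinearMap.trace ℂ (EuclideanSpace ℂ (Fin d))
          (ξ : EuclideanSpace ℂ (Fin d) →ₗ[ℂ] EuclideanSpace ℂ (Fin d)) = 1 ∧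
        M₁ * ξ * M₂ = 0) ↔ (¬ IsUnit M₁ ∨ ¬ IsUnit M₂) := by
  constructor
  · rintro ⟨ξ, -, htr, hξ⟩
    by_contra! ⟨hu₁, hu₂⟩
    rw [eq_zero_of_mul_mul_eq_zero hu₁ hu₂ hξ, toLinearMap_zero, map_zero] at htr
    exact zero_ne_one htr
  · rintro (h | h)
    · obtain ⟨ξ, hξ, htr, hM₁ξ⟩ := M₁.exists_isPositive_trace_eq_one_mul_eq_zero_of_not_isUnit h
      exact ⟨ξ, hξ, htr, by rw [hM₁ξ, zero_mul]⟩
    · obtain ⟨ξ, hξ, htr, hξM₂⟩ := M₂.exists_isPositive_trace_eq_one_mul_eq_zero_of_not_isUnit' h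
      exact ⟨ξ, hξ, htr, by rw [mul_assoc, hξM₂, mul_zero]⟩

/-- Perfect single-shot labeling of a binary observable {M₁, M₂}: a density operator
ξ with M₁ ξ M₂ = 0 exists iff at least one of the effects is not invertible. -/
theorem perfect_labeling_iff_rank_deficient (d : ℕ) (hd : 0 < d)
    (M₁ M₂ : EuclideanSpace ℂ (Fin d) →L[ℂ] EuclideanSpace ℂ (Fin d))
    (h₁ : M₁.IsPositive) (h₂ : M₂.IsPositive) (hsum : M₁ + M₂ = 1) :
    (∃ ξ : EuclideanSpace ℂ (Fin d) →L[ℂ] EuclideanSpace ℂ (Fin d),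
        ξ.IsPositive ∧
        LinearMap.trace ℂ (EuclideanSpace ℂ (Fin d))
          (ξ : EuclideanSpace ℂ (Fin d) →ₗ[ℂ] EuclideanSpace ℂ (Fin d)) = 1 ∧
        M₁ * ξ * M₂ = 0) ↔ (¬ IsUnit M₁ ∨ ¬ IsUnit M₂) :=
  perfect_labeling_iff_rank_deficient_general d M₁ M₂
end

section
/- Let M₁, …, Mₙ be positive semidefinite operators summing to I on a finite-dimensional complex Hilbert space, with exactly m of them equal to a fixed effect E. If there exists a unit vector φ such that ⟨φ, Mⱼ φ⟩ = 0 for all j with Mⱼ ≠ E, then E φ = (1/m) φ; in particular 1/m is the largest eigenvalue of E. -/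
/-!
If `⟪φ, T φ⟫ = 0` for a positive `T`, then `T φ = 0`: write `T = S * S` with `S = √T`
self-adjoint, so that `‖S φ‖² = ⟪φ, T φ⟫`. Hence applying `∑ j, M j = 1` to `φ` only the `m`
copies of `E` survive, and `m • E φ = φ`. For the eigenvalue bound, the `m` copies of `E` are
dominated in the Loewner order by the whole sum, so `m • E ≤ 1`.
-/

open scoped InnerProductSpace Classical

open Finset

theorem ContinuousLinearMap.IsPositive.apply_eq_zero_of_inner_self_apply_eq_zero
    {H : Type*} [NormedAddCommGroup H] [InnerProductSpace ℂ H] [CompleteSpace H]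
    {T : H →L[ℂ] H} (hT : T.IsPositive) {x : H} (h : ⟪x, T x⟫_ℂ = 0) : T x = 0 := by
  have hT0 : 0 ≤ T := (T.nonneg_iff_isPositive).mpr hT
  obtain ⟨S, hS, rfl⟩ : ∃ S : H →L[ℂ] H, IsSelfAdjoint S ∧ T = S * S :=
    ⟨CFC.sqrt T, (CFC.sqrt_nonneg T).isSelfAdjoint, (CFC.sqrt_mul_sqrt_self T).symm⟩
  have hSx : S x = 0 := by
    rw [← inner_self_eq_zero (𝕜 := ℂ), ← h]
    exact hS.isSymmetric x (S x)
  change S (S x) = 0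
  rw [hSx, map_zero]

theorem Finset.sum_filter_eq_card_filter_nsmul {ι A : Type*} [AddCommMonoid A]
    (s : Finset ι) (f : ι → A) (c : A) :
    ∑ i ∈ s with f i = c, f i = #{i ∈ s | f i = c} • c :=
  sum_eq_card_nsmul fun _ hi => (mem_filter.mp hi).2

section

variable {ι : Type*} [Fintype ι]

theorem card_nsmul_apply_eq_self_of_sum_eq_one {R V : Type*} [Semiring R] [TopologicalSpace V]
    [AddCommMonoid V] [Module R V] [ContinuousAdd V] (M : ι → V →L[R] V)
    (hsum : ∑ j, M j = 1) (E : V →L[R] V) {x : V} (hx : ∀ j, M j ≠ E → M j x = 0) :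
    #{j | M j = E} • E x = x :=
  calc #{j | M j = E} • E x = (∑ j with M j = E, M j) x := by
        rw [sum_filter_eq_card_filter_nsmul, smul_apply]
    _ = ∑ j with M j = E, M j x := _root_.sum_apply _ _ _
    _ = ∑ j, M j x := sum_filter_of_ne fun j _ hj => by_contra fun hE => hj (hx j hE)
    _ = x := by rw [← _root_.sum_apply, hsum, one_apply_eq_self]

variable {H : Type*} [NormedAddCommGroup H] [InnerProductSpace ℂ H] [CompleteSpace H]

theorem card_nsmul_le_one_of_sum_eq_one (M : ι → H →L[ℂ] H) (hpos : ∀ j, (M j).IsPositive)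
    (hsum : ∑ j, M j = 1) (E : H →L[ℂ] H) : #{j | M j = E} • E ≤ 1 :=
  calc #{j | M j = E} • E = ∑ j with M j = E, M j := (sum_filter_eq_card_filter_nsmul _ _ _).symm
    _ ≤ ∑ j, M j := sum_le_sum_of_subset_of_nonneg (filter_subset _ _) fun j _ _ =>
        (M j).nonneg_iff_isPositive.mpr (hpos j)
    _ = 1 := hsum

end

theorem mul_le_one_of_nsmul_le_one_of_hasEigenvalue {𝕜 H : Type*} [RCLike 𝕜]
    [NormedAddCommGroup H] [InnerProductSpace 𝕜 H]
    {E : H →L[𝕜] H} {n : ℕ} (hE : n • E ≤ 1) {μ : ℝ}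
    (hμ : Module.End.HasEigenvalue (E : H →ₗ[𝕜] H) μ) : n * μ ≤ 1 := by
  obtain ⟨ψ, hψ⟩ := hμ.exists_hasEigenvector
  have hψ0 : 0 < ‖ψ‖ ^ 2 := by have := norm_pos_iff.mpr hψ.2; positivity
  have hquad : 0 ≤ (1 - n * μ) * ‖ψ‖ ^ 2 := by
    have := ((ContinuousLinearMap.le_def _ _).mp hE).re_inner_nonneg_left ψ
    have hEψ : E ψ = (μ : 𝕜) • ψ := hψ.apply_eq_smul
    rw [sub_apply, smul_apply, hEψ, one_apply_eq_self, inner_sub_left,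
      ← Nat.cast_smul_eq_nsmul 𝕜, smul_smul, inner_smul_left, inner_self_eq_norm_sq_to_K] at this
    rwa [← RCLike.ofReal_natCast, ← RCLike.ofReal_mul, RCLike.conj_ofReal, ← one_sub_mul,
      ← RCLike.ofReal_pow, ← RCLike.ofReal_one, ← RCLike.ofReal_sub, ← RCLike.ofReal_mul,
      RCLike.ofReal_re] at this
  exact sub_nonneg.mp (nonneg_of_mul_nonneg_left hquad hψ0)

theorem partial_labeling_converse_general (d n : ℕ)
    (M : Fin n → (EuclideanSpace ℂ (Fin d) →L[ℂ] EuclideanSpace ℂ (Fin d)))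
    (hpos : ∀ j, (M j).IsPositive) (hsum : ∑ j, M j = 1)
    (E : EuclideanSpace ℂ (Fin d) →L[ℂ] EuclideanSpace ℂ (Fin d))
    (hE : ∃ i, M i = E) (m : ℕ)
    (hm : m = (Finset.univ.filter (fun j => M j = E)).card)
    (φ : EuclideanSpace ℂ (Fin d))
    (hzero : ∀ j, M j ≠ E → ⟪φ, (M j) φ⟫_ℂ = 0) :
    E φ = ((1 / m : ℝ) : ℂ) • φ ∧
      (∀ μ : ℝ, Module.End.HasEigenvalue
          (E : EuclideanSpace ℂ (Fin d) →ₗ[ℂ] EuclideanSpace ℂ (Fin d)) (μ : ℂ) →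
          μ ≤ 1 / m) := by
  obtain ⟨i, hi⟩ := hE
  have hm0 : (0 : ℝ) < m := by
    rw [hm, Nat.cast_pos]
    exact card_pos.mpr ⟨i, mem_filter.mpr ⟨mem_univ i, hi⟩⟩
  have hEφ : m • E φ = φ := hm ▸ card_nsmul_apply_eq_self_of_sum_eq_one M hsum E fun j hj =>
    (hpos j).apply_eq_zero_of_inner_self_apply_eq_zero (hzero j hj)
  refine ⟨?_, fun μ hμ => ?_⟩
  · rw [← Nat.cast_smul_eq_nsmul ℂ, ← eq_inv_smul_iff₀ (by exact_mod_cast hm0.ne')] at hEφ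
    rw [hEφ, one_div, Complex.ofReal_inv, Complex.ofReal_natCast]
  · rw [le_div_iff₀ hm0, mul_comm]
    exact mul_le_one_of_nsmul_le_one_of_hasEigenvalue
      (hm ▸ card_nsmul_le_one_of_sum_eq_one M hpos hsum E) hμ

/-- Converse of the partial-labeling characterization: if all effects different from
E have zero probability on the unit vector φ, then E φ = (1/m) φ and 1/m is the
largest eigenvalue of E, where m is the multiplicity of E among the effects. -/
theorem partial_labeling_converse (d n : ℕ)
    (M : Fin n → (EuclideanSpace ℂ (Fin d) →L[ℂ] EuclideanSpace ℂ (Fin d)))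
    (hpos : ∀ j, (M j).IsPositive) (hsum : ∑ j, M j = 1)
    (E : EuclideanSpace ℂ (Fin d) →L[ℂ] EuclideanSpace ℂ (Fin d))
    (hE : ∃ i, M i = E) (m : ℕ)
    (hm : m = (Finset.univ.filter (fun j => M j = E)).card)
    (φ : EuclideanSpace ℂ (Fin d)) (hφ : ‖φ‖ = 1)
    (hzero : ∀ j, M j ≠ E → ⟪φ, (M j) φ⟫_ℂ = 0) :
    E φ = ((1 / m : ℝ) : ℂ) • φ ∧
      (∀ μ : ℝ, Module.End.HasEigenvalue
          (E : EuclideanSpace ℂ (Fin d) →ₗ[ℂ] EuclideanSpace ℂ (Fin d)) (μ : ℂ) →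
          μ ≤ 1 / m) :=
  partial_labeling_converse_general d n M hpos hsum E hE m hm φ hzero
end

section
/- Let M₁ be positive semidefinite with M₁ ≤ I on a finite-dimensional complex Hilbert space of dimension d ≥ 1, and M₂ = I − M₁. Then the minimum over unit vectors φ of min(⟨φ, M₁ φ⟩, ⟨φ, M₂ φ⟩) equals (1 − ‖M₁ − M₂‖)/2. -/
open scoped InnerProductSpace

private lemma min_eq_half (a b t : ℝ) (hs : a + b = 1) (hdiff : a - b = t) :
    min a b = (1 - |t|) / 2 := by
  rcases abs_cases t with ⟨h, h'⟩ | ⟨h, h'⟩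
  · rw [min_eq_right (by linarith)]; linarith
  · rw [min_eq_left (by linarith)]; linarith

/-- The minimum over unit vectors φ of min(⟨φ,M₁φ⟩, ⟨φ,M₂φ⟩) equals
(1 − ‖M₁ − M₂‖)/2, the minimum-error single-shot labeling probability. -/
theorem min_error_labeling_probability (d : ℕ) (hd : 0 < d)
    (M₁ : EuclideanSpace ℂ (Fin d) →L[ℂ] EuclideanSpace ℂ (Fin d))
    (h₁ : M₁.IsPositive) (hle : (1 - M₁).IsPositive)
    (M₂ : EuclideanSpace ℂ (Fin d) →L[ℂ] EuclideanSpace ℂ (Fin d))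
    (hM₂ : M₂ = 1 - M₁) :
    IsLeast {x : ℝ | ∃ φ : EuclideanSpace ℂ (Fin d), ‖φ‖ = 1 ∧
        x = min (⟪φ, M₁ φ⟫_ℂ).re (⟪φ, M₂ φ⟫_ℂ).re}
      ((1 - ‖M₁ - M₂‖) / 2) := by
  set E := EuclideanSpace ℂ (Fin d)
  set A : E →L[ℂ] E := M₁ - M₂ with hA_def
  have hAsa : IsSelfAdjoint A := by
    rw [hA_def, hM₂]
    exact h₁.isSelfAdjoint.sub hle.isSelfAdjoint
  have hsym : (A : E →ₗ[ℂ] E).IsSymmetric := hAsa.isSymmetric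
  have hn : Module.finrank ℂ E = d := finrank_euclideanSpace_fin
  set b := hsym.eigenvectorBasis hn with hb
  set μ := hsym.eigenvalues hn with hμ
  -- key identity: for unit φ, the min is (1 - |re⟪φ, Aφ⟫|)/2
  have key : ∀ φ : E, ‖φ‖ = 1 →
      min (⟪φ, M₁ φ⟫_ℂ).re (⟪φ, M₂ φ⟫_ℂ).re = (1 - |(⟪φ, A φ⟫_ℂ).re|) / 2 := by
    intro φ hφ
    apply min_eq_half
    · have : ⟪φ, M₁ φ⟫_ℂ + ⟪φ, M₂ φ⟫_ℂ = ⟪φ, φ⟫_ℂ := by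
        rw [← inner_add_right]
        congr 1
        rw [hM₂]; simp
      have h2 : (⟪φ, M₁ φ⟫_ℂ).re + (⟪φ, M₂ φ⟫_ℂ).re = (⟪φ, φ⟫_ℂ).re := by
        rw [← Complex.add_re, this]
      rw [h2, inner_self_eq_norm_sq_to_K (𝕜 := ℂ), hφ]; norm_num
    · have : ⟪φ, M₁ φ⟫_ℂ - ⟪φ, M₂ φ⟫_ℂ = ⟪φ, A φ⟫_ℂ := by
        rw [← inner_sub_right]
        rfl
      rw [← Complex.sub_re, this]
  -- lower bound on the set
  have hlb : ∀ φ : E, ‖φ‖ = 1 → |(⟪φ, A φ⟫_ℂ).re| ≤ ‖A‖ := by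
    intro φ hφ
    calc |(⟪φ, A φ⟫_ℂ).re| ≤ ‖⟪φ, A φ⟫_ℂ‖ := Complex.abs_re_le_norm _
      _ ≤ ‖φ‖ * ‖A φ‖ := norm_inner_le_norm _ _
      _ ≤ ‖φ‖ * (‖A‖ * ‖φ‖) := by
          gcongr; exact A.le_opNorm φ
      _ = ‖A‖ := by rw [hφ]; ring
  -- pick eigenvalue of maximal absolute value
  obtain ⟨i₀, -, hi₀⟩ := Finset.exists_max_image Finset.univ (fun i => |μ i|)
    ⟨⟨0, hd⟩, Finset.mem_univ _⟩
  have hbv : ∀ i, A (b i) = (μ i : ℂ) • b i := by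
    intro i
    exact hsym.apply_eigenvectorBasis hn i
  have hbnorm : ∀ i, ‖b i‖ = 1 := fun i => b.orthonormal.1 i
  -- ‖A‖ = |μ i₀|
  have hub : ‖A‖ ≤ |μ i₀| := by
    apply ContinuousLinearMap.opNorm_le_bound _ (abs_nonneg _)
    intro x
    have h1 : ‖A x‖ = ‖b.repr (A x)‖ := (b.repr.norm_map (A x)).symm
    have h2 : ‖x‖ = ‖b.repr x‖ := (b.repr.norm_map x).symm
    rw [h1, h2]
    have hrepr : ∀ i, b.repr (A x) i = (μ i : ℂ) * b.repr x i := by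
      intro i
      exact hsym.eigenvectorBasis_apply_self_apply hn x i
    rw [EuclideanSpace.norm_eq, EuclideanSpace.norm_eq]
    rw [show |μ i₀| * Real.sqrt (∑ i, ‖b.repr x i‖ ^ 2)
        = Real.sqrt (∑ i, |μ i₀| ^ 2 * ‖b.repr x i‖ ^ 2) by
      rw [← Finset.mul_sum, Real.sqrt_mul (by positivity), Real.sqrt_sq_eq_abs, abs_abs]]
    apply Real.sqrt_le_sqrt
    apply Finset.sum_le_sum
    intro i _
    rw [hrepr i, norm_mul]
    have : ‖(μ i : ℂ)‖ = |μ i| := by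
      rw [Complex.norm_real, Real.norm_eq_abs]
    rw [this, mul_pow]
    exact mul_le_mul_of_nonneg_right
      (pow_le_pow_left₀ (abs_nonneg _) (hi₀ i (Finset.mem_univ i)) 2) (by positivity)
  have hinner_i0 : (⟪b i₀, A (b i₀)⟫_ℂ).re = μ i₀ := by
    rw [hbv i₀, inner_smul_right]
    have : ⟪b i₀, b i₀⟫_ℂ = 1 := by
      rw [inner_self_eq_norm_sq_to_K (𝕜 := ℂ), hbnorm i₀]; norm_num
    rw [this, mul_one, Complex.ofReal_re]
  have hlbn : |μ i₀| ≤ ‖A‖ := by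
    have := hlb (b i₀) (hbnorm i₀)
    rwa [hinner_i0] at this
  have hnormA : ‖A‖ = |μ i₀| := le_antisymm hub hlbn
  constructor
  · -- membership: φ = b i₀
    refine ⟨b i₀, hbnorm i₀, ?_⟩
    rw [key (b i₀) (hbnorm i₀), hinner_i0, hnormA]
  · -- lower bound
    rintro x ⟨φ, hφ, rfl⟩
    rw [key φ hφ]
    have := hlb φ hφ
    linarith
end

section
/- Let ρ be a density operator on H_anc ⊗ H and F a positive semidefinite operator on H_anc ⊗ K. For any positive semidefinite operators M₁, M₂ on H with M₁ + M₂ = I, if tr[(id ⊗ 𝓜₁₂)(ρ) F] = 1 and tr[(id ⊗ 𝓜₂₁)(ρ) F] = 0, where 𝓜_{jk}(σ) = tr(σMⱼ)|1⟩⟨1| + tr(σMₖ)|2⟩⟨2| for K = ℂ², then there exists a unit vector in the kernel of M₁ or of M₂. -/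
/-!
Write `X(M) = Tr_H[(1 ⊗ M) ρ]` for the operator left on the ancilla by the effect `M`, and
`G₀, G₁` for the diagonal blocks of `F`. The success and failure probabilities are
`tr(X(M₁) G₀) + tr(X(M₂) G₁)` and `tr(X(M₂) G₀) + tr(X(M₁) G₁)`, sums of nonnegative terms.
For positive semidefinite `X, G`, `tr(X G) = 0` iff `X G = 0`. If `M₁` and `M₂` were both
positive definite, `X(M₁)` and `X(M₂)` would have the same kernel, namely the `w` with
`(w ⊗ 1)ᴴ ρ (w ⊗ 1) = 0`, so zero failure probability would force zero success probability.
-/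

open scoped ComplexOrder
/-- The extension `id ⊗ 𝓜` of the measure-and-prepare channel
`𝓜(σ) = tr(σ N₀)|1⟩⟨1| + tr(σ N₁)|2⟩⟨2|` to an ancilla of dimension `a`,
acting on a bipartite state `ρ` on `H_anc ⊗ H`. -/
noncomputable def extMeasurePrepare (a d : ℕ) (N : Fin 2 → Matrix (Fin d) (Fin d) ℂ)
    (ρ : Matrix (Fin a × Fin d) (Fin a × Fin d) ℂ) :
    Matrix (Fin a × Fin 2) (Fin a × Fin 2) ℂ :=
  Matrix.of fun p q =>
    if p.2 = q.2 then
      Matrix.trace ((Matrix.of fun s t => ρ (p.1, s) (q.1, t)) * N p.2)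
    else 0

open Matrix
open scoped MatrixOrder

lemma Matrix.trace_conjTranspose_mul_self_mul_conjTranspose_mul_self {R n : Type*}
    [CommSemiring R] [StarRing R] [Fintype n] (A B : Matrix n n R) :
    (Aᴴ * A * (Bᴴ * B)).trace = ((A * Bᴴ)ᴴ * (A * Bᴴ)).trace := by
  rw [conjTranspose_mul, conjTranspose_conjTranspose, Matrix.mul_assoc B, trace_mul_comm B]
  simp only [Matrix.mul_assoc]

variable {𝕜 : Type*} [RCLike 𝕜]

namespace Matrix.PosSemidef

variable {n : Type*} [Fintype n] {P Q : Matrix n n 𝕜}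

lemma exists_eq_conjTranspose_mul_self (hP : P.PosSemidef) :
    ∃ A : Matrix n n 𝕜, P = Aᴴ * A := by
  classical
  exact CStarAlgebra.nonneg_iff_eq_star_mul_self.mp hP.nonneg

lemma trace_mul_nonneg (hP : P.PosSemidef) (hQ : Q.PosSemidef) : 0 ≤ (P * Q).trace := by
  obtain ⟨A, rfl⟩ := hP.exists_eq_conjTranspose_mul_self
  obtain ⟨B, rfl⟩ := hQ.exists_eq_conjTranspose_mul_self
  rw [trace_conjTranspose_mul_self_mul_conjTranspose_mul_self]
  exact (posSemidef_conjTranspose_mul_self _).trace_nonneg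

lemma mul_eq_zero_of_trace_mul_eq_zero (hP : P.PosSemidef) (hQ : Q.PosSemidef)
    (h : (P * Q).trace = 0) : P * Q = 0 := by
  obtain ⟨A, rfl⟩ := hP.exists_eq_conjTranspose_mul_self
  obtain ⟨B, rfl⟩ := hQ.exists_eq_conjTranspose_mul_self
  rw [trace_conjTranspose_mul_self_mul_conjTranspose_mul_self,
    trace_conjTranspose_mul_self_eq_zero_iff] at h
  calc Aᴴ * A * (Bᴴ * B) = Aᴴ * (A * Bᴴ) * B := by simp only [mul_assoc]
    _ = 0 := by rw [h, mul_zero, zero_mul]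

lemma eq_zero_of_trace_mul_posDef {M : Matrix n n 𝕜} (hP : P.PosSemidef) (hM : M.PosDef)
    (h : (P * M).trace = 0) : P = 0 := by
  classical
  exact hM.isUnit.mul_left_eq_zero.mp (hP.mul_eq_zero_of_trace_mul_eq_zero hM.posSemidef h)

lemma trace_mul_eq_zero_of_ker_le {X Y : Matrix n n 𝕜} (hX : X.PosSemidef) (hP : P.PosSemidef)
    (hker : ∀ v, X *ᵥ v = 0 → Y *ᵥ v = 0) (h : (X * P).trace = 0) : (Y * P).trace = 0 := by
  have hXP := hX.mul_eq_zero_of_trace_mul_eq_zero hP h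
  suffices Y * P = 0 by rw [this, trace_zero]
  refine ext_iff_mulVec.mpr fun v => ?_
  rw [← mulVec_mulVec, hker _ (by rw [mulVec_mulVec, hXP, zero_mulVec]), zero_mulVec]

lemma exists_norm_eq_one_mulVec_eq_zero (hP : P.PosSemidef) (h : ¬ P.PosDef) :
    ∃ φ : EuclideanSpace 𝕜 n, ‖φ‖ = 1 ∧ P *ᵥ φ = 0 := by
  classical
  have hdet : P.det = 0 := by simpa [hP.posDef_iff_det_ne_zero] using h
  obtain ⟨v, hv, hPv⟩ := exists_mulVec_eq_zero_iff.mpr hdet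
  have hv' : WithLp.toLp 2 v ≠ 0 := by simpa using hv
  refine ⟨((‖WithLp.toLp 2 v‖ : 𝕜)⁻¹ • WithLp.toLp 2 v), norm_smul_inv_norm hv', ?_⟩
  simp [mulVec_smul, hPv]

end Matrix.PosSemidef

section condState

open scoped Kronecker

variable {ι : Type*}

def vecTensorOne (n : Type*) [DecidableEq n] (w : ι → 𝕜) : Matrix (ι × n) n 𝕜 :=
  (replicateCol Unit w ⊗ₖ (1 : Matrix n n 𝕜)).submatrix id (Prod.mk ())

variable {n : Type*} [Fintype n]

/-- `Tr_H[(1 ⊗ M) ρ]`: the unnormalized state left on the ancilla when the effect `M` clicks. -/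
def condState (ρ : Matrix (ι × n) (ι × n) 𝕜) (M : Matrix n n 𝕜) : Matrix ι ι 𝕜 :=
  of fun i j => (ρ.submatrix (Prod.mk i) (Prod.mk j) * M).trace

lemma conjTranspose_vecTensorOne_mul_mul [Fintype ι] [DecidableEq n]
    (ρ : Matrix (ι × n) (ι × n) 𝕜) (w : ι → 𝕜) :
    (vecTensorOne n w)ᴴ * ρ * vecTensorOne n w =
      ∑ i, ∑ j, (star (w i) * w j) • ρ.submatrix (Prod.mk i) (Prod.mk j) := by
  ext s t
  simp only [vecTensorOne, mul_apply, conjTranspose_apply, submatrix_apply, kroneckerMap_apply,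
    replicateCol_apply, one_apply, Fintype.sum_prod_type, id, Matrix.sum_apply, Matrix.smul_apply,
    smul_eq_mul, apply_ite (star : 𝕜 → 𝕜), star_zero, mul_ite, mul_one, mul_zero, ite_mul, zero_mul,
    Finset.sum_ite_eq', Finset.mem_univ, if_true, Finset.sum_mul]
  rw [Finset.sum_comm]
  exact Finset.sum_congr rfl fun _ _ => Finset.sum_congr rfl fun _ _ => by ring

lemma star_dotProduct_condState_mulVec [Fintype ι] [DecidableEq n]
    (ρ : Matrix (ι × n) (ι × n) 𝕜) (M : Matrix n n 𝕜) (w : ι → 𝕜) :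
    star w ⬝ᵥ condState ρ M *ᵥ w = ((vecTensorOne n w)ᴴ * ρ * vecTensorOne n w * M).trace := by
  simp only [conjTranspose_vecTensorOne_mul_mul, Finset.sum_mul, trace_sum, smul_mul_assoc,
    trace_smul, smul_eq_mul, dotProduct, mulVec, condState, of_apply, Pi.star_apply,
    Finset.mul_sum]
  exact Finset.sum_congr rfl fun _ _ => Finset.sum_congr rfl fun _ _ => by ring

variable {ρ : Matrix (ι × n) (ι × n) 𝕜} {M : Matrix n n 𝕜}

lemma condState_isHermitian (hρ : ρ.IsHermitian) (hM : M.IsHermitian) :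
    (condState ρ M).IsHermitian := by
  ext i j
  simp only [conjTranspose_apply, condState, trace, diag, mul_apply, submatrix_apply, of_apply,
    star_sum, star_mul']
  rw [Finset.sum_comm]
  refine Finset.sum_congr rfl fun s _ => Finset.sum_congr rfl fun t _ => ?_
  rw [hρ.apply, hM.apply, mul_comm]

variable [Fintype ι]

lemma condState_posSemidef (hρ : ρ.PosSemidef) (hM : M.PosSemidef) :
    (condState ρ M).PosSemidef := by
  classical
  refine .of_dotProduct_mulVec_nonneg (condState_isHermitian hρ.isHermitian hM.isHermitian)
    fun w => ?_
  rw [star_dotProduct_condState_mulVec]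
  exact (hρ.conjTranspose_mul_mul_same _).trace_mul_nonneg hM

lemma condState_mulVec_eq_zero_of_posDef {M' : Matrix n n 𝕜} (hρ : ρ.PosSemidef)
    (hM : M.PosDef) (hM' : M'.PosSemidef) {w : ι → 𝕜} (hw : condState ρ M *ᵥ w = 0) :
    condState ρ M' *ᵥ w = 0 := by
  classical
  rw [← (condState_posSemidef hρ hM.posSemidef).dotProduct_mulVec_zero_iff,
    star_dotProduct_condState_mulVec] at hw
  rw [← (condState_posSemidef hρ hM').dotProduct_mulVec_zero_iff,
    star_dotProduct_condState_mulVec,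
    (hρ.conjTranspose_mul_mul_same _).eq_zero_of_trace_mul_posDef hM hw, zero_mul, trace_zero]

lemma trace_condState_mul_eq_zero_of_posDef {M' : Matrix n n 𝕜} {G : Matrix ι ι 𝕜}
    (hρ : ρ.PosSemidef) (hM : M.PosDef) (hM' : M'.PosSemidef) (hG : G.PosSemidef)
    (h : (condState ρ M * G).trace = 0) : (condState ρ M' * G).trace = 0 :=
  (condState_posSemidef hρ hM.posSemidef).trace_mul_eq_zero_of_ker_le hG
    (fun _ => condState_mulVec_eq_zero_of_posDef hρ hM hM') h

end condState

lemma trace_extMeasurePrepare_mul {a d : ℕ} (N : Fin 2 → Matrix (Fin d) (Fin d) ℂ)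
    (ρ : Matrix (Fin a × Fin d) (Fin a × Fin d) ℂ)
    (F : Matrix (Fin a × Fin 2) (Fin a × Fin 2) ℂ) :
    (extMeasurePrepare a d N ρ * F).trace
      = ∑ k, (condState ρ (N k) * F.submatrix (·, k) (·, k)).trace := by
  simp only [trace, diag, mul_apply, extMeasurePrepare, condState, submatrix_apply,
    of_apply, Fintype.sum_prod_type, ite_mul, zero_mul, Finset.sum_ite_eq, Finset.mem_univ,
    if_true]
  rw [Finset.sum_comm]

theorem perfect_discrimination_forces_kernel_general (a d : ℕ)
    (ρ : Matrix (Fin a × Fin d) (Fin a × Fin d) ℂ)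
    (hρ : ρ.PosSemidef)
    (F : Matrix (Fin a × Fin 2) (Fin a × Fin 2) ℂ) (hF : F.PosSemidef)
    (M₁ M₂ : Matrix (Fin d) (Fin d) ℂ)
    (h₁ : M₁.PosSemidef) (h₂ : M₂.PosSemidef)
    (hsucc : (extMeasurePrepare a d ![M₁, M₂] ρ * F).trace = 1)
    (hfail : (extMeasurePrepare a d ![M₂, M₁] ρ * F).trace = 0) :
    ∃ φ : EuclideanSpace ℂ (Fin d), ‖φ‖ = 1 ∧
      (M₁.mulVec φ = 0 ∨ M₂.mulVec φ = 0) := by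
  have not_both_posDef : ¬ (M₁.PosDef ∧ M₂.PosDef) := by
    rintro ⟨hM₁, hM₂⟩
    have hG (k : Fin 2) : (F.submatrix (·, k) (·, k)).PosSemidef := hF.submatrix _
    simp only [trace_extMeasurePrepare_mul, Fin.sum_univ_two, cons_val_zero, cons_val_one]
      at hsucc hfail
    obtain ⟨hfail₀, hfail₁⟩ := (add_eq_zero_iff_of_nonneg
      ((condState_posSemidef hρ h₂).trace_mul_nonneg (hG 0))
      ((condState_posSemidef hρ h₁).trace_mul_nonneg (hG 1))).mp hfail
    rw [trace_condState_mul_eq_zero_of_posDef hρ hM₂ h₁ (hG 0) hfail₀,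
      trace_condState_mul_eq_zero_of_posDef hρ hM₁ h₂ (hG 1) hfail₁, add_zero] at hsucc
    exact zero_ne_one hsucc
  rcases not_and_or.mp not_both_posDef with h | h
  · obtain ⟨φ, hφ, hker⟩ := h₁.exists_norm_eq_one_mulVec_eq_zero h
    exact ⟨φ, hφ, .inl hker⟩
  · obtain ⟨φ, hφ, hker⟩ := h₂.exists_norm_eq_one_mulVec_eq_zero h
    exact ⟨φ, hφ, .inr hker⟩

/-- Entanglement-assisted perfect single-shot discrimination of the two labelings
of a binary observable forces one of the effects to have nontrivial kernel. -/
theorem perfect_discrimination_forces_kernel (a d : ℕ)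
    (ρ : Matrix (Fin a × Fin d) (Fin a × Fin d) ℂ)
    (hρ : ρ.PosSemidef) (hρtr : ρ.trace = 1)
    (F : Matrix (Fin a × Fin 2) (Fin a × Fin 2) ℂ) (hF : F.PosSemidef)
    (M₁ M₂ : Matrix (Fin d) (Fin d) ℂ)
    (h₁ : M₁.PosSemidef) (h₂ : M₂.PosSemidef) (hsum : M₁ + M₂ = 1)
    (hsucc : (extMeasurePrepare a d ![M₁, M₂] ρ * F).trace = 1)
    (hfail : (extMeasurePrepare a d ![M₂, M₁] ρ * F).trace = 0) :
    ∃ φ : EuclideanSpace ℂ (Fin d), ‖φ‖ = 1 ∧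
      (M₁.mulVec φ = 0 ∨ M₂.mulVec φ = 0) :=
  perfect_discrimination_forces_kernel_general a d ρ hρ F hF M₁ M₂ h₁ h₂ hsucc hfail
end
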